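/- arXiv:1808.05090 — 2 statements merged into one kernel-verified Lean document; each statement's English description precedes it below -/
import Mathlib

section
/- Let Φ be an affine root system, c a Coxeter element in its Weyl group, and s a simple reflection that is initial or final in c. Then γ_{scs} = s·γ_c if s ≠ s_aff, and γ_{scs} = t_θ·γ_c if s = s_aff. -/
open scoped BigOperators

noncomputable section

/-- A symmetrizable generalized Cartan matrix of affine type, together with the
coefficient vector `dz` of the primitive positive imaginary root `δ` spanning the
(one dimensional) kernel of the associated symmetric bilinear form. -/
structure AffineGCM (n : ℕ) where
  /-- the generalized Cartan matrix -/
  a : Matrix (Fin n) (Fin n) ℤ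
  /-- symmetrizing factors -/
  d : Fin n → ℝ
  diag : ∀ i, a i i = 2
  offdiag : ∀ i j, i ≠ j → a i j ≤ 0
  d_pos : ∀ i, 0 < d i
  symmetrizable : ∀ i j, d i * (a i j : ℝ) = d j * (a j i : ℝ)
  /-- `K` is positive semidefinite (on the real span of the simple roots) -/
  posSemidef : ∀ g : Fin n → ℝ, 0 ≤ ∑ i, ∑ j, g i * g j * (d i * (a i j : ℝ))
  /-- `K` is not positive definite -/
  not_posDef : ∃ g : Fin n → ℝ, g ≠ 0 ∧ ∑ i, ∑ j, g i * g j * (d i * (a i j : ℝ)) = 0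
  /-- the restriction of `K` to the span of every proper subset of the simple roots
  is positive definite -/
  proper_posDef : ∀ J : Finset (Fin n), J ≠ Finset.univ →
    ∀ g : Fin n → ℝ, (∀ i, i ∉ J → g i = 0) → g ≠ 0 →
      0 < ∑ i, ∑ j, g i * g j * (d i * (a i j : ℝ))
  /-- coordinates of the positive imaginary root `δ` in the basis of simple roots -/
  dz : Fin n → ℤ
  dz_pos : ∀ i, 0 < dz i
  /-- `δ` is the imaginary root closest to the origin: its coordinates are coprime -/
  dz_prim : Finset.univ.gcd dz = 1
  /-- `δ` spans the kernel of `K` -/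
  dz_ker : ∀ j, ∑ i, (dz i : ℝ) * (d i * (a i j : ℝ)) = 0

namespace AffineGCM

variable {n : ℕ}

/-- The ambient vector space `V`, with the simple roots as standard basis. -/
abbrev V (n : ℕ) := Fin n → ℂ

/-- the simple root `α i` (the `i`-th standard basis vector) -/
def α (i : Fin n) : V n := Pi.single i 1

/-- a vector is *positive* if it lies in the nonnegative real span of the simple roots -/
def IsPosRoot (v : V n) : Prop := ∀ i, 0 ≤ (v i).re ∧ (v i).im = 0

/-- a vector is *negative* if it lies in the nonpositive real span of the simple roots -/
def IsNegRoot (v : V n) : Prop := ∀ i, (v i).re ≤ 0 ∧ (v i).im = 0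

/-- the `g`-orbit of `x`: all `g ^ k • x` for integers `k` -/
def orbit (g : V n ≃ₗ[ℂ] V n) (x : V n) : Set (V n) := Set.range fun k : ℤ => (g ^ k) x

/-- `U g`: the span of all eigenvectors of `g`, i.e. the direct sum of its eigenspaces -/
def eigSpan (g : V n ≃ₗ[ℂ] V n) : Submodule ℂ (V n) :=
  ⨆ μ : ℂ, Module.End.eigenspace (g : Module.End ℂ (V n)) μ

/-- the span `V_fin` of the simple roots other than `α aff` -/
def Vfin (aff : Fin n) : Submodule ℂ (V n) :=
  Submodule.span ℂ (α '' {i : Fin n | i ≠ aff})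

variable (C : AffineGCM n)

/-- the simple coroot `α i ^ ∨ = (d i)⁻¹ • α i` -/
def coroot (i : Fin n) : V n := ((C.d i : ℂ))⁻¹ • α i

/-- The symmetric bilinear form `K`, determined by `K (coroot i) (α j) = a i j`,
that is, `K (α i) (α j) = d i * a i j`. -/
def K : V n →ₗ[ℂ] V n →ₗ[ℂ] ℂ :=
  LinearMap.mk₂ ℂ
    (fun x y => ∑ i, ∑ j, x i * y j * ((C.d i : ℂ) * (C.a i j : ℂ)))
    (fun x x' y => by
      simp only [Pi.add_apply, add_mul, Finset.sum_add_distrib])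
    (fun r x y => by
      simp only [Pi.smul_apply, smul_eq_mul, Finset.mul_sum]
      exact Finset.sum_congr rfl fun i _ => Finset.sum_congr rfl fun j _ => by ring)
    (fun x y y' => by
      simp only [Pi.add_apply, mul_add, add_mul, Finset.sum_add_distrib])
    (fun r x y => by
      simp only [Pi.smul_apply, smul_eq_mul, Finset.mul_sum]
      exact Finset.sum_congr rfl fun i _ => Finset.sum_congr rfl fun j _ => by ring)

/-- the linear map `v ↦ v - K x v • y`; reflections are special cases -/
def reflMap (x y : V n) : V n →ₗ[ℂ] V n where
  toFun v := v - C.K x v • y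
  map_add' u v := by simp only [map_add, add_smul]; abel
  map_smul' r u := by simp only [map_smul, smul_eq_mul, RingHom.id_apply, smul_sub, smul_smul]

lemma reflMap_apply (x y v : V n) : C.reflMap x y v = v - C.K x v • y := rfl

/-- the simple reflection `s i` as a linear endomorphism -/
def sLin (i : Fin n) : V n →ₗ[ℂ] V n := C.reflMap (C.coroot i) (α i)

lemma K_α_α (i j : Fin n) : C.K (α i) (α j) = (C.d i : ℂ) * (C.a i j : ℂ) := by
  simp [K, α, LinearMap.mk₂_apply, Pi.single_apply, ite_mul, zero_mul,
    Finset.sum_ite_eq', Finset.mem_univ]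

lemma K_coroot_α (i j : Fin n) : C.K (C.coroot i) (α j) = (C.a i j : ℂ) := by
  have hd : (C.d i : ℂ) ≠ 0 := by exact_mod_cast ne_of_gt (C.d_pos i)
  simp only [coroot, map_smul, LinearMap.smul_apply, smul_eq_mul, K_α_α]
  field_simp

lemma sLin_invol (i : Fin n) (v : V n) : C.sLin i (C.sLin i v) = v := by
  have h2 : C.K (C.coroot i) (α i) = 2 := by
    rw [K_coroot_α, C.diag]; norm_num
  simp only [sLin, reflMap_apply, map_sub, map_smul, h2, smul_eq_mul]
  module

/-- the simple reflection `s i` -/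
def s (i : Fin n) : V n ≃ₗ[ℂ] V n :=
  LinearEquiv.ofLinear (C.sLin i) (C.sLin i)
    (LinearMap.ext fun v => C.sLin_invol i v) (LinearMap.ext fun v => C.sLin_invol i v)

/-- the Weyl group `W`, as a subgroup of the group of linear automorphisms of `V` -/
def Wgroup : Subgroup (V n ≃ₗ[ℂ] V n) := Subgroup.closure (Set.range C.s)

/-- the Coxeter element `c = s 1 * s 2 * ⋯ * s n` -/
def cox : V n ≃ₗ[ℂ] V n := (List.ofFn C.s).prod

/-- the positive imaginary root `δ` -/
def δv : V n := fun i => ((C.dz i : ℤ) : ℂ)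

/-- the set of real roots: `W`-images of the simple roots -/
def realRoots : Set (V n) := {v | ∃ w ∈ C.Wgroup, ∃ i, w (α i) = v}

/-- the root system `Φ`: real roots together with the imaginary roots `k • δ`, `k ≠ 0` -/
def Φ : Set (V n) := C.realRoots ∪ {v | ∃ k : ℤ, k ≠ 0 ∧ v = (k : ℂ) • C.δv}

/-- `T→ = {α 1, s 1 α 2, …, s 1 ⋯ s (n-1) α n}` -/
def Tproj : Set (V n) :=
  Set.range fun k : Fin n => ((List.ofFn C.s).take k.val).prod (α k)

/-- `T← = {α n, s n α (n-1), …, s n ⋯ s 2 α 1}` -/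
def Tinj : Set (V n) :=
  Set.range fun k : Fin n => ((List.ofFn C.s).reverse.take (n - 1 - k.val)).prod (α k)

/-- `Φ_fin`, the finite root system `Φ ∩ V_fin` -/
def Φfin (aff : Fin n) : Set (V n) := C.Φ ∩ (Vfin aff : Set (V n))

/-- the root `θ = δ - [δ : α aff] • α aff` of `Φ_fin` -/
def θv (aff : Fin n) : V n := C.δv - ((C.dz aff : ℤ) : ℂ) • α aff

/-- the reflection `t β : v ↦ v - K (β^∨) v • β` in a (real) root `β`,
where `β^∨ = (2 / K β β) • β` -/
def tRefl (β : V n) : V n →ₗ[ℂ] V n := C.reflMap ((2 / C.K β β) • β) β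

/-- `c_◁ = s 1 * ⋯ * s (aff - 1)` -/
def cleft (aff : Fin n) : V n →ₗ[ℂ] V n := ((List.ofFn C.sLin).take aff.val).prod

/-- `c_▷ = s (aff + 1) * ⋯ * s n` -/
def cright (aff : Fin n) : V n →ₗ[ℂ] V n := ((List.ofFn C.sLin).drop (aff.val + 1)).prod

/-- `Υ^fin = Φ_fin ∩ U c` -/
def Υfin (aff : Fin n) : Set (V n) := C.Φfin aff ∩ (eigSpan C.cox : Set (V n))

/-- `B` is a simple system for a set `Θ` of roots: a linearly independent subset of `Θ`
such that every element of `Θ` is a nonnegative or a nonpositive combination of `B`. -/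
def IsSimpleSystem (Θ : Set (V n)) (B : Finset (V n)) : Prop :=
  ↑B ⊆ Θ ∧ LinearIndependent ℂ (fun b : B => (b : V n)) ∧
    ∀ v ∈ Θ, ∃ g : V n → ℝ, ((∀ b ∈ B, 0 ≤ g b) ∨ (∀ b ∈ B, g b ≤ 0)) ∧
      v = ∑ b ∈ B, (g b : ℂ) • b

/-- two roots of `Θ` are connected if they are joined by a chain of roots of `Θ`
that are pairwise non-orthogonal (with respect to `K`) -/
def Connected (Θ : Set (V n)) (x y : V n) : Prop :=
  Relation.ReflTransGen (fun u v => u ∈ Θ ∧ v ∈ Θ ∧ C.K u v ≠ 0) x y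

/-- the irreducible component of `x` in `Θ` -/
def component (Θ : Set (V n)) (x : V n) : Set (V n) := {y | y ∈ Θ ∧ C.Connected Θ x y}

/-- a set of roots is of finite type `A` if it consists exactly of the vectors
`±(β i + β (i+1) + ⋯ + β j)` for a linearly independent family `β 1, …, β k` -/
def IsTypeA (Θ : Set (V n)) : Prop :=
  ∃ (k : ℕ) (β : Fin k → V n), LinearIndependent ℂ β ∧ (∀ i, β i ∈ Θ) ∧
    Θ = {v | ∃ i j : Fin k, i ≤ j ∧
      (v = ∑ l ∈ Finset.Icc i j, β l ∨ v = -∑ l ∈ Finset.Icc i j, β l)}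

/-- `Ω = {β 1, t (β 1) (β 2), …, t (β 1) ⋯ t (β (m-1)) (β m)}` for an ordered
tuple `β` of roots -/
def Ωset {m : ℕ} (β : Fin m → V n) : Set (V n) :=
  Set.range fun j : Fin m => (((List.ofFn fun i => C.tRefl (β i)).take j.val).prod) (β j)

/-- `s i` is initial in a Coxeter element `c` if `c` is the product of a permutation
of all the simple reflections starting with `s i` -/
def IsInitial (i : Fin n) (c : V n ≃ₗ[ℂ] V n) : Prop :=
  ∃ l : List (Fin n), (i :: l).Perm (List.finRange n) ∧ ((i :: l).map C.s).prod = c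

/-- `s i` is final in a Coxeter element `c` if `c` is the product of a permutation
of all the simple reflections ending with `s i` -/
def IsFinal (i : Fin n) (c : V n ≃ₗ[ℂ] V n) : Prop :=
  ∃ l : List (Fin n), (l ++ [i]).Perm (List.finRange n) ∧ ((l ++ [i]).map C.s).prod = c

/-- the skew-symmetric bilinear form `ω_c`, determined by
`ω_c (coroot i) (α j) = a i j` if `i > j`, `= 0` if `i = j`, `= -a i j` if `i < j` -/
def ω : V n →ₗ[ℂ] V n →ₗ[ℂ] ℂ :=
  LinearMap.mk₂ ℂ
    (fun x y => ∑ i, ∑ j, x i * y j *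
      ((if j < i then 1 else if i = j then 0 else -1) * ((C.d i : ℂ) * (C.a i j : ℂ))))
    (fun x x' y => by
      simp only [Pi.add_apply, add_mul, Finset.sum_add_distrib])
    (fun r x y => by
      simp only [Pi.smul_apply, smul_eq_mul, Finset.mul_sum]
      exact Finset.sum_congr rfl fun i _ => Finset.sum_congr rfl fun j _ => by ring)
    (fun x y y' => by
      simp only [Pi.add_apply, mul_add, add_mul, Finset.sum_add_distrib])
    (fun r x y => by
      simp only [Pi.smul_apply, smul_eq_mul, Finset.mul_sum]
      exact Finset.sum_congr rfl fun i _ => Finset.sum_congr rfl fun j _ => by ring)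

/-!
A vector fixed by a Coxeter element `w = s_{l₁} ⋯ s_{lₙ}` is `K`-orthogonal to every simple
root: peeling off `s_{l₁}`, the remaining factors do not touch the `α_{l₁}`-coordinate, so
`s_{l₁}` must fix it as well. Since `K` is positive definite on the span of any proper subset
of `Δ`, its radical meets `V_fin` only in `0`, so `γ_w` is unique.

It therefore suffices to check that the proposed vector lies in `V_fin` and solves
`(scs - 1) x = δ`. Conjugation gives `(scs - 1)(s γ_c) = s δ = δ`, and `s γ_c ∈ V_fin` when
`s ≠ s_aff`. For `s = s_aff`, `θ ≡ -[δ:α_aff] α_aff` modulo the radical, so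
`t_θ γ_c = s γ_c + e δ` for a scalar `e`; adding a multiple of the fixed vector `δ` does not
change `(scs - 1) x`, and `t_θ γ_c ∈ V_fin` because `θ ∈ V_fin`.
-/

lemma s_apply (i : Fin n) (v : V n) : C.s i v = v - C.K (C.coroot i) v • α i := rfl

lemma tRefl_apply (β v : V n) : C.tRefl β v = v - (2 / C.K β β * C.K β v) • β := by
  rw [tRefl, reflMap_apply, map_smul, LinearMap.smul_apply, smul_eq_mul]

lemma apply_eq_zero_of_mem_Vfin {aff : Fin n} {v : V n} (hv : v ∈ Vfin aff) : v aff = 0 := by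
  have hle : Vfin aff ≤ LinearMap.ker (LinearMap.proj aff : V n →ₗ[ℂ] ℂ) := by
    rw [Vfin, Submodule.span_le]
    rintro _ ⟨j, hj, rfl⟩
    exact Pi.single_eq_of_ne (Ne.symm hj) 1
  exact hle hv

lemma s_mul_self (i : Fin n) : C.s i * C.s i = 1 :=
  LinearEquiv.ext (C.sLin_invol i)

lemma reflMap_apply_eq_zero {x y v : V n} {j : Fin n} (hy : y j = 0) (hv : v j = 0) :
    C.reflMap x y v j = 0 := by
  simp [reflMap_apply, hy, hv]

lemma K_apply (x y : V n) :
    C.K x y = ∑ i, ∑ j, x i * y j * ((C.d i : ℂ) * (C.a i j : ℂ)) := rfl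

lemma K_symm (x y : V n) : C.K x y = C.K y x := by
  rw [K_apply, K_apply, Finset.sum_comm]
  refine Finset.sum_congr rfl fun i _ => Finset.sum_congr rfl fun j _ => ?_
  have h := congrArg Complex.ofReal (C.symmetrizable j i)
  push_cast at h
  rw [h]; ring

lemma K_coroot_apply (i : Fin n) (v : V n) :
    C.K (C.coroot i) v = ∑ j, (C.a i j : ℂ) * v j := by
  have hd : (C.d i : ℂ) ≠ 0 := by exact_mod_cast (C.d_pos i).ne'
  simp only [K_apply, coroot, α, Pi.smul_apply, Pi.single_apply, smul_eq_mul, mul_ite, mul_one,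
    mul_zero, ite_mul, zero_mul, Finset.sum_ite_irrel, Finset.sum_const_zero, Finset.sum_ite_eq',
    Finset.mem_univ, if_true]
  refine Finset.sum_congr rfl fun j _ => ?_
  field_simp

lemma K_δv_left (v : V n) : C.K C.δv v = 0 := by
  rw [K_apply, Finset.sum_comm]
  refine Finset.sum_eq_zero fun j _ => ?_
  have h := congrArg Complex.ofReal (C.dz_ker j)
  push_cast at h
  calc ∑ i, C.δv i * v j * ((C.d i : ℂ) * (C.a i j : ℂ))
      = v j * ∑ i, (C.dz i : ℂ) * ((C.d i : ℂ) * (C.a i j : ℂ)) := by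
        rw [Finset.mul_sum]; simp only [δv]; exact Finset.sum_congr rfl fun i _ => by ring
    _ = 0 := by rw [h, mul_zero]

lemma K_δv_right (v : V n) : C.K v C.δv = 0 := by
  rw [K_symm, K_δv_left]

lemma s_δv (i : Fin n) : C.s i C.δv = C.δv := by
  rw [s_apply, K_symm, coroot, map_smul, K_δv_left, smul_zero, zero_smul, sub_zero]

lemma prod_map_s_δv (l : List (Fin n)) : (l.map C.s).prod C.δv = C.δv := by
  induction l with
  | nil => rfl
  | cons a t ih =>
    rw [List.map_cons, List.prod_cons, LinearEquiv.mul_apply, ih, s_δv]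

lemma tRefl_α (i : Fin n) (v : V n) : C.tRefl (α i) v = C.s i v := by
  have hd : (C.d i : ℂ) ≠ 0 := by exact_mod_cast (C.d_pos i).ne'
  have hαα : C.K (α i) (α i) = 2 * C.d i := by rw [K_α_α, C.diag]; push_cast; ring
  rw [tRefl_apply, s_apply, coroot, map_smul, LinearMap.smul_apply, smul_eq_mul, hαα]
  congr 2
  field_simp

lemma tRefl_δv_add_smul (x v : V n) {k : ℂ} (hk : k ≠ 0) :
    C.tRefl (C.δv + k • x) v = C.tRefl x v - (2 / (k * C.K x x) * C.K x v) • C.δv := by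
  have hKv : C.K (C.δv + k • x) v = k * C.K x v := by simp [K_δv_left]
  have hKK : C.K (C.δv + k • x) (C.δv + k • x) = k * k * C.K x x := by
    simp only [map_add, map_smul, LinearMap.add_apply, LinearMap.smul_apply, K_δv_left, K_δv_right,
      smul_eq_mul, zero_add]
    ring
  rw [tRefl_apply, tRefl_apply, hKv, hKK]
  by_cases hx : C.K x x = 0
  · simp [hx]
  · match_scalars <;> field_simp

lemma prod_map_s_apply_of_notMem {l : List (Fin n)} {j : Fin n} (hj : j ∉ l) (v : V n) :
    (l.map C.s).prod v j = v j := by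
  induction l with
  | nil => rfl
  | cons a t ih =>
    rw [List.mem_cons, not_or] at hj
    rw [List.map_cons, List.prod_cons, LinearEquiv.mul_apply, s_apply, Pi.sub_apply,
      Pi.smul_apply, α, Pi.single_eq_of_ne hj.1, smul_zero, sub_zero, ih hj.2]

lemma K_coroot_eq_zero_of_prod_map_s_apply_eq_self {l : List (Fin n)} (hl : l.Nodup)
    {v : V n} (hv : (l.map C.s).prod v = v) : ∀ j ∈ l, C.K (C.coroot j) v = 0 := by
  induction l with
  | nil => simp
  | cons a t ih =>
    obtain ⟨hat, ht⟩ := List.nodup_cons.mp hl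
    rw [List.map_cons, List.prod_cons, LinearEquiv.mul_apply] at hv
    set w := (t.map C.s).prod v
    have hKw : C.K (C.coroot a) w = 0 := by
      have h := congrFun hv a
      rw [s_apply, Pi.sub_apply, Pi.smul_apply, ← C.prod_map_s_apply_of_notMem hat v] at h
      simpa [α, w] using h
    have hwv : w = v := by rw [← hv, s_apply, hKw, zero_smul, sub_zero]
    intro j hj
    rcases List.mem_cons.mp hj with rfl | hjt
    · rwa [← hwv]
    · exact ih ht hwv j hjt

lemma eq_zero_of_mulVec_eq_zero_of_apply_eq_zero {aff : Fin n} {g : Fin n → ℝ}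
    (hker : (C.a.map (Int.cast : ℤ → ℝ)).mulVec g = 0) (h0 : g aff = 0) : g = 0 := by
  by_contra hg
  have hpos := C.proper_posDef _ (Finset.erase_ssubset (Finset.mem_univ aff)).ne g
    (fun i hi => by
      simp only [Finset.mem_erase, Finset.mem_univ, and_true, ne_eq, not_not] at hi
      rwa [hi]) hg
  refine hpos.ne' (Finset.sum_eq_zero fun i _ => ?_)
  calc ∑ j, g i * g j * (C.d i * (C.a i j : ℝ))
      = g i * C.d i * (C.a.map (Int.cast : ℤ → ℝ)).mulVec g i := by
        rw [Matrix.mulVec, dotProduct, Finset.mul_sum]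
        exact Finset.sum_congr rfl fun j _ => by simp only [Matrix.map_apply]; ring
    _ = 0 := by rw [hker, Pi.zero_apply, mul_zero]

lemma eq_zero_of_K_coroot_eq_zero {aff : Fin n} {v : V n}
    (hker : ∀ j, C.K (C.coroot j) v = 0) (h0 : v aff = 0) : v = 0 := by
  have hre : (fun j => (v j).re) = 0 := by
    refine C.eq_zero_of_mulVec_eq_zero_of_apply_eq_zero (aff := aff) ?_ (by simp [h0])
    funext i
    simpa [K_coroot_apply, Matrix.mulVec, dotProduct] using congrArg Complex.re (hker i)
  have him : (fun j => (v j).im) = 0 := by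
    refine C.eq_zero_of_mulVec_eq_zero_of_apply_eq_zero (aff := aff) ?_ (by simp [h0])
    funext i
    simpa [K_coroot_apply, Matrix.mulVec, dotProduct] using congrArg Complex.im (hker i)
  funext j
  exact Complex.ext (congrFun hre j) (congrFun him j)

lemma eq_of_prod_map_s_sub_eq {l : List (Fin n)} (hl : l.Perm (List.finRange n)) {aff : Fin n}
    {x y : V n} (hx : x aff = 0) (hy : y aff = 0)
    (h : (l.map C.s).prod x - x = (l.map C.s).prod y - y) : x = y := by
  have hfix : (l.map C.s).prod (x - y) = x - y := by
    rw [map_sub]; linear_combination (norm := module) h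
  have horth := C.K_coroot_eq_zero_of_prod_map_s_apply_eq_self
    (hl.nodup_iff.mpr (List.nodup_finRange n)) hfix
  refine sub_eq_zero.mp (C.eq_zero_of_K_coroot_eq_zero (aff := aff)
    (fun j => horth j (hl.mem_iff.mpr (List.mem_finRange j))) ?_)
  rw [Pi.sub_apply, hx, hy, sub_zero]

lemma exists_perm_s_mul_mul_s_eq {i : Fin n} {c : V n ≃ₗ[ℂ] V n}
    (hi : C.IsInitial i c ∨ C.IsFinal i c) :
    ∃ l : List (Fin n), l.Perm (List.finRange n) ∧ C.s i * c * C.s i = (l.map C.s).prod := by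
  rcases hi with ⟨l, hp, rfl⟩ | ⟨l, hp, rfl⟩
  · refine ⟨l ++ [i], (List.perm_append_singleton i l).trans hp, ?_⟩
    simp [← mul_assoc (C.s i) (C.s i), s_mul_self]
  · refine ⟨i :: l, (List.perm_append_singleton i l).symm.trans hp, ?_⟩
    simp [mul_assoc, s_mul_self]

lemma s_mul_mul_s_apply_s (i : Fin n) (g : V n ≃ₗ[ℂ] V n) (v : V n) :
    (C.s i * g * C.s i) (C.s i v) = C.s i (g v) := by
  simp only [LinearEquiv.mul_apply, ← LinearEquiv.mul_apply (C.s i) (C.s i), s_mul_self,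
    LinearEquiv.coe_one, id]

theorem gamma_source_sink_general {n : ℕ} (C : AffineGCM n) (aff : Fin n)
    (i : Fin n) (hi : C.IsInitial i C.cox ∨ C.IsFinal i C.cox)
    (γ γ' : V n) (hγ : γ ∈ Vfin aff) (hγ1 : C.cox γ - γ = C.δv)
    (hγ' : γ' ∈ Vfin aff) (hγ'1 : (C.s i * C.cox * C.s i) γ' - γ' = C.δv) :
    (i ≠ aff → γ' = C.s i γ) ∧ (i = aff → γ' = C.tRefl (C.θv aff) γ) := by
  obtain ⟨l, hl, hw⟩ := C.exists_perm_s_mul_mul_s_eq hi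
  rw [hw] at hγ'1
  have hsγ : (l.map C.s).prod (C.s i γ) - C.s i γ = C.δv := by
    rw [← hw, s_mul_mul_s_apply_s, ← map_sub, hγ1, s_δv]
  have hγaff : γ aff = 0 := apply_eq_zero_of_mem_Vfin hγ
  have huniq : ∀ x : V n, x aff = 0 → (l.map C.s).prod x - x = C.δv → γ' = x :=
    fun x hx hx1 => C.eq_of_prod_map_s_sub_eq hl (apply_eq_zero_of_mem_Vfin hγ') hx
      (hγ'1.trans hx1.symm)
  refine ⟨fun hne => huniq _ (C.reflMap_apply_eq_zero (Pi.single_eq_of_ne hne.symm 1) hγaff) hsγ,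
    ?_⟩
  rintro rfl
  have hk : (C.dz i : ℂ) ≠ 0 := by exact_mod_cast (C.dz_pos i).ne'
  obtain ⟨e, htθ⟩ : ∃ e : ℂ, C.tRefl (C.θv i) γ = C.s i γ + e • C.δv := by
    rw [θv, sub_eq_add_neg, ← neg_smul, tRefl_δv_add_smul _ _ _ (neg_ne_zero.mpr hk), tRefl_α]
    exact ⟨_, by rw [sub_eq_add_neg, ← neg_smul]⟩
  refine huniq _ (C.reflMap_apply_eq_zero (by simp [θv, δv, α]) hγaff) ?_
  rw [htθ, map_add, map_smul, prod_map_s_δv]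
  linear_combination (norm := module) hsγ

/-- Proposition 3.2: if `s` is initial or final in `c`, then `γ_(s c s) = s γ_c`
when `s ≠ s_aff`, and `γ_(s c s) = t_θ γ_c` when `s = s_aff`. -/
theorem gamma_source_sink {n : ℕ} (C : AffineGCM n) (aff : Fin n)
    (haff : ((Subgroup.closure (C.s '' {j : Fin n | j ≠ aff}) : Subgroup (V n ≃ₗ[ℂ] V n)) : Set (V n ≃ₗ[ℂ] V n)).Finite)
    (i : Fin n) (hi : C.IsInitial i C.cox ∨ C.IsFinal i C.cox)
    (γ γ' : V n) (hγ : γ ∈ Vfin aff) (hγ1 : C.cox γ - γ = C.δv)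
    (hγ' : γ' ∈ Vfin aff) (hγ'1 : (C.s i * C.cox * C.s i) γ' - γ' = C.δv) :
    (i ≠ aff → γ' = C.s i γ) ∧ (i = aff → γ' = C.tRefl (C.θv aff) γ) :=
  gamma_source_sink_general C aff i hi γ γ' hγ hγ1 hγ' hγ'1

end AffineGCM
end
end

section
/- Let c be a Coxeter element in the Weyl group of an affine root system. The linear functional x_c = ω_c(δ, ·) ∈ V* is fixed by the action of c on V*, and x_c is a negative real scalar multiple of φ_c. -/
open scoped BigOperators

noncomputable section

namespace AffineGCM

variable {n : ℕ}

variable (C : AffineGCM n)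

/-! The Euler form `E_c` satisfies `K = E_c + E_cᵀ`, `ω_c = E_c - E_cᵀ` and
`E_c (c v, u) = -E_c (u, v)`. The last identity is checked on `u = α i` by writing
`c = c_< * s i * c_>`: the reflections in `c_<` fix `E_c (·, α i)` and those in `c_>` fix
`E_c (α i, ·)`, while `E_c (s i t, α i) = -E_c (α i, t)`.
Since `K δ = 0`, `ω_c (δ, x) = 2 E_c (δ, x) = -2 E_c (x, δ)`, which the identity shows to be
`c`-invariant. Applied to `c γ_c = γ_c + δ` it gives `E_c (δ, v) = -K (γ_c, v)`, so `x_c = -2 φ_c`. -/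

lemma _root_.List.exists_finRange_eq_append_cons (i : Fin n) :
    ∃ L R : List (Fin n), List.finRange n = L ++ i :: R ∧ (∀ j ∈ L, j < i) ∧ ∀ j ∈ R, i < j := by
  obtain ⟨L, R, hLR⟩ := List.mem_iff_append.mp (List.mem_finRange i)
  have hsorted := (List.sortedLT_finRange n).pairwise
  rw [hLR, List.pairwise_append, List.pairwise_cons] at hsorted
  exact ⟨L, R, hLR, fun j hj => hsorted.2.2 j hj i List.mem_cons_self, hsorted.2.1.1⟩

lemma cox_eq_map_finRange : C.cox = ((List.finRange n).map C.s).prod := by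
  rw [cox, List.ofFn_eq_map]

lemma apply_s_apply (f : V n →ₗ[ℂ] ℂ) (j : Fin n) (w : V n) :
    f (C.s j w) = f w - C.K (C.coroot j) w * f (α j) := by
  simp [s, sLin, reflMap_apply]

lemma apply_prod_s_of_forall_apply_α_eq_zero (f : V n →ₗ[ℂ] ℂ) (l : List (Fin n))
    (hl : ∀ j ∈ l, f (α j) = 0) (w : V n) : f ((l.map C.s).prod w) = f w := by
  induction l with
  | nil => rfl
  | cons j l ih =>
    rw [List.map_cons, List.prod_cons, LinearEquiv.mul_apply, apply_s_apply,
      hl j List.mem_cons_self, mul_zero, sub_zero, ih fun k hk => hl k (List.mem_cons_of_mem j hk)]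

/-- The Euler form `E_c`: `E_c (coroot i) (α j)` is `a i j` if `i > j`, `1` if `i = j` and `0` if
`i < j`. -/
def euler : V n →ₗ[ℂ] V n →ₗ[ℂ] ℂ :=
  Matrix.toLinearMap₂' ℂ (Matrix.of fun i j =>
    if j < i then (C.d i : ℂ) * (C.a i j : ℂ) else if i = j then (C.d i : ℂ) else 0)

lemma euler_α_α (i j : Fin n) :
    C.euler (α i) (α j) =
      if j < i then (C.d i : ℂ) * (C.a i j : ℂ) else if i = j then (C.d i : ℂ) else 0 := by
  simp [euler, Matrix.toLinearMap₂'_apply', α]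

lemma ω_α_α (i j : Fin n) :
    C.ω (α i) (α j) =
      (if j < i then 1 else if i = j then 0 else -1) * ((C.d i : ℂ) * (C.a i j : ℂ)) := by
  simp only [ω, α, LinearMap.mk₂_apply, Pi.single_apply, ite_mul, one_mul, zero_mul]
  rw [Finset.sum_eq_single i (fun b _ hb => by simp [hb]) (by simp),
    Finset.sum_eq_single j (fun b _ hb => by simp [hb]) (by simp)]
  simp

lemma d_mul_a_symm (i j : Fin n) : (C.d i : ℂ) * (C.a i j : ℂ) = (C.d j : ℂ) * (C.a j i : ℂ) := by
  exact_mod_cast C.symmetrizable i j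

lemma K_eq_euler_add_flip : C.K = C.euler + C.euler.flip := by
  refine LinearMap.ext_basis (Pi.basisFun ℂ (Fin n)) (Pi.basisFun ℂ (Fin n)) fun i j => ?_
  simp only [Pi.basisFun_apply]
  change C.K (α i) (α j) = C.euler (α i) (α j) + C.euler (α j) (α i)
  rw [K_α_α, euler_α_α, euler_α_α]
  rcases lt_trichotomy i j with h | rfl | h
  · simp [h, h.ne, not_lt.mpr h.le, C.d_mul_a_symm i j]
  · simp only [C.diag, Int.cast_ofNat, lt_self_iff_false, if_false, if_true]
    ring
  · simp [h, h.ne, not_lt.mpr h.le]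

lemma ω_eq_euler_sub_flip : C.ω = C.euler - C.euler.flip := by
  refine LinearMap.ext_basis (Pi.basisFun ℂ (Fin n)) (Pi.basisFun ℂ (Fin n)) fun i j => ?_
  simp only [Pi.basisFun_apply]
  change C.ω (α i) (α j) = C.euler (α i) (α j) - C.euler (α j) (α i)
  rw [ω_α_α, euler_α_α, euler_α_α]
  rcases lt_trichotomy i j with h | rfl | h
  · simp [h, h.ne, not_lt.mpr h.le, C.d_mul_a_symm i j]
  · simp
  · simp [h, h.ne, not_lt.mpr h.le]

lemma euler_α_α_of_lt {i j : Fin n} (h : i < j) : C.euler (α i) (α j) = 0 := by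
  simp [euler_α_α, not_lt.mpr h.le, h.ne]

lemma K_coroot_mul_d (i : Fin n) (t : V n) : C.K (C.coroot i) t * C.d i = C.K (α i) t := by
  have hd : (C.d i : ℂ) ≠ 0 := by exact_mod_cast (C.d_pos i).ne'
  simp only [coroot, map_smul, LinearMap.smul_apply, smul_eq_mul]
  field_simp

lemma euler_s_self (i : Fin n) (t : V n) : C.euler (C.s i t) (α i) = -C.euler (α i) t := by
  have hK := LinearMap.congr_fun₂ C.K_eq_euler_add_flip (α i) t
  simp only [LinearMap.add_apply, LinearMap.flip_apply] at hK
  have h := C.apply_s_apply (C.euler.flip (α i)) i t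
  simp only [LinearMap.flip_apply, euler_α_α, lt_irrefl, if_false, if_true] at h
  rw [h, C.K_coroot_mul_d, hK]
  ring

lemma euler_cox_α (i : Fin n) (v : V n) : C.euler (C.cox v) (α i) = -C.euler (α i) v := by
  obtain ⟨L, R, hLR, hL, hR⟩ := List.exists_finRange_eq_append_cons i
  have hLfix := C.apply_prod_s_of_forall_apply_α_eq_zero (C.euler.flip (α i)) L
    fun j hj => C.euler_α_α_of_lt (hL j hj)
  have hRfix := C.apply_prod_s_of_forall_apply_α_eq_zero (C.euler (α i)) R
    fun j hj => C.euler_α_α_of_lt (hR j hj)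
  simp only [LinearMap.flip_apply] at hLfix
  rw [cox_eq_map_finRange, hLR, List.map_append, List.map_cons, List.prod_append, List.prod_cons,
    LinearEquiv.mul_apply, LinearEquiv.mul_apply, hLfix, euler_s_self, hRfix]

lemma euler_cox (u v : V n) : C.euler (C.cox v) u = -C.euler u v := by
  have h : C.euler (C.cox v) = -C.euler.flip v :=
    (Pi.basisFun ℂ (Fin n)).ext fun i => by
      simp only [Pi.basisFun_apply, LinearMap.neg_apply, LinearMap.flip_apply]
      exact C.euler_cox_α i v
  simpa using LinearMap.congr_fun h u

lemma K_δv : C.K C.δv = 0 := by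
  refine (Pi.basisFun ℂ (Fin n)).ext fun j => ?_
  have h := congrArg (fun x : ℝ => (x : ℂ)) (C.dz_ker j)
  simp only [Pi.basisFun_apply, LinearMap.zero_apply]
  simpa [K, δv, LinearMap.mk₂_apply, Pi.single_apply, mul_assoc] using h

lemma euler_δv_left (x : V n) : C.euler C.δv x = -C.euler x C.δv := by
  have h := LinearMap.congr_fun₂ C.K_eq_euler_add_flip C.δv x
  simp only [K_δv, LinearMap.zero_apply, LinearMap.add_apply, LinearMap.flip_apply] at h
  linear_combination -h

lemma ω_δv_apply (x : V n) : C.ω C.δv x = 2 * C.euler C.δv x := by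
  rw [ω_eq_euler_sub_flip, LinearMap.sub_apply, LinearMap.sub_apply, LinearMap.flip_apply,
    C.euler_δv_left x]
  ring

lemma euler_δv_cox (w : V n) : C.euler C.δv (C.cox w) = C.euler C.δv w := by
  rw [euler_δv_left, euler_cox, neg_neg]

lemma euler_δv_eq_neg_K {γ : V n} (hγ : C.cox γ - γ = C.δv) (v : V n) :
    C.euler C.δv v = -C.K γ v := by
  have h := C.euler_cox v γ
  rw [eq_add_of_sub_eq' hγ, map_add, LinearMap.add_apply] at h
  rw [K_eq_euler_add_flip, LinearMap.add_apply, LinearMap.add_apply, LinearMap.flip_apply]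
  linear_combination h

theorem xc_fixed_and_negative_multiple_general {n : ℕ} (C : AffineGCM n)
    (γ : V n) (hγ1 : C.cox γ - γ = C.δv) :
    (∀ v : V n, C.ω C.δv (C.cox.symm v) = C.ω C.δv v) ∧
    (∃ r : ℝ, r < 0 ∧ C.ω C.δv = (r : ℂ) • C.K γ) := by
  refine ⟨fun v => ?_, -2, by norm_num, LinearMap.ext fun v => ?_⟩
  · rw [ω_δv_apply, ω_δv_apply, ← euler_δv_cox, LinearEquiv.apply_symm_apply]
  · rw [ω_δv_apply, euler_δv_eq_neg_K C hγ1, LinearMap.smul_apply, smul_eq_mul]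
    push_cast
    ring

/-- Lemma 3.5: the functional `x_c = ω_c (δ, ·)` is fixed by `c` and is a negative
scalar multiple of `φ_c = K (γ_c) ·`. -/
theorem xc_fixed_and_negative_multiple {n : ℕ} (C : AffineGCM n) (aff : Fin n)
    (haff : ((Subgroup.closure (C.s '' {j : Fin n | j ≠ aff}) : Subgroup (V n ≃ₗ[ℂ] V n)) : Set (V n ≃ₗ[ℂ] V n)).Finite)
    (γ : V n) (hγ : γ ∈ Vfin aff) (hγ1 : C.cox γ - γ = C.δv) :
    (∀ v : V n, C.ω C.δv (C.cox.symm v) = C.ω C.δv v) ∧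
    (∃ r : ℝ, r < 0 ∧ C.ω C.δv = (r : ℂ) • C.K γ) :=
  xc_fixed_and_negative_multiple_general C γ hγ1

end AffineGCM
end
end
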